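/- arXiv:hep-lat/9604006 — 3 statements merged into one kernel-verified Lean document; each statement's English description precedes it below -/
import Mathlib

section
/- Let ω > 0 and let χ : U* → ℝ be a function in the class Ψ₁^ω(U) (i.e., χ is continuous on U* = U \ {0}, continuously differentiable off the line v = 0, satisfies |χ(t,w)| ≤ ω whenever w < |t|/ν_t for some ν_t > 0 depending on t ≠ 0, and there exist positive constants c, K₁, K₂, ε with |χ(0,v) − c/v| < K₁/v^{1−ε} and |∂χ/∂t(t,v)| < K₂/v² for v ≠ 0). Then there exist δ, ε' > 0 and for every t ≠ 0 a constant ν_t > 0 such that for all (t,v), (t,w) in U* with v < δ and ν_t·w < |t| < ε'·v, one has χ(t,v) > |χ(t,w)|. -/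
open Real Set

/-
Along the horizontal segment from `(0, v)` to `(t, v)` the mean value theorem gives
`χ(t,v) ≥ χ(0,v) - K₂|t|/v²`, and the singular behaviour at `t = 0` gives
`χ(0,v) ≥ c/v - K₁ v^ε / v`. Choosing `|t| < ε' v` with `ε' ≤ c/(4K₂)` and `v` so small that
`K₁ v^ε ≤ c/4`, both error terms are at most `c/(4v)`, so `χ(t,v) > c/(2v)`, which exceeds `ω`
once `v < c/(2ω)`, while `|χ(t,w)| ≤ ω` whenever `ν t · w < |t|`.
-/

theorem abs_sub_le_of_hasDerivAt_uIcc {f f' : ℝ → ℝ} {a b C : ℝ}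
    (hf : ∀ x ∈ uIcc a b, HasDerivAt f (f' x) x) (hf' : ∀ x ∈ uIcc a b, |f' x| ≤ C) :
    |f b - f a| ≤ C * |b - a| := by
  simpa only [Real.norm_eq_abs] using (convex_uIcc a b).norm_image_sub_le_of_norm_hasDerivWithin_le
    (fun x hx => (hf x hx).hasDerivWithinAt) hf' left_mem_uIcc right_mem_uIcc

theorem exists_pos_forall_mem_of_relOpen_upperHalfPlane {U : Set (ℝ × ℝ)}
    (hU : ∃ V : Set (ℝ × ℝ), IsOpen V ∧ U = V ∩ {p : ℝ × ℝ | 0 ≤ p.2}) (h0 : (0, 0) ∈ U) :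
    ∃ r > 0, ∀ s v : ℝ, |s| < r → 0 ≤ v → v < r → (s, v) ∈ U := by
  obtain ⟨V, hV, rfl⟩ := hU
  obtain ⟨r, hr, hball⟩ := Metric.isOpen_iff.1 hV (0, 0) h0.1
  refine ⟨r, hr, fun s v hs hv hvr => ⟨hball ?_, hv⟩⟩
  rw [Metric.mem_ball, Prod.dist_eq, Real.dist_0_eq_abs, Real.dist_0_eq_abs, abs_of_nonneg hv]
  exact max_lt hs hvr

theorem lt_of_abs_sub_div_lt_div_rpow {x c K v ε : ℝ} (hv : 0 < v) (hK : K * v ^ ε ≤ c / 4)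
    (hx : |x - c / v| < K / v ^ (1 - ε)) : 3 * c / (4 * v) < x := by
  have hKv : K / v ^ (1 - ε) ≤ c / (4 * v) := by
    rw [rpow_sub hv, rpow_one, div_div_eq_mul_div, ← div_div]
    gcongr
  have hsplit : 3 * c / (4 * v) = c / v - c / (4 * v) := by field_simp; ring
  linarith [(abs_lt.1 hx).1]

theorem half_div_lt_of_abs_sub_div_lt_of_abs_deriv_lt {f f' : ℝ → ℝ} {t v c K₁ K₂ ε : ℝ}
    (hv : 0 < v) (hf : ∀ s ∈ uIcc 0 t, HasDerivAt f (f' s) s)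
    (hf' : ∀ s ∈ uIcc 0 t, |f' s| < K₂ / v ^ 2) (hf0 : |f 0 - c / v| < K₁ / v ^ (1 - ε))
    (hK₁ : K₁ * v ^ ε ≤ c / 4) (hK₂ : K₂ * |t| ≤ c / 4 * v) :
    c / 2 / v < f t := by
  have hdrift : |f t - f 0| ≤ K₂ / v ^ 2 * |t - 0| :=
    abs_sub_le_of_hasDerivAt_uIcc hf fun s hs => (hf' s hs).le
  have hdrift_le : K₂ / v ^ 2 * |t - 0| ≤ c / (4 * v) := by
    rw [sub_zero, div_mul_eq_mul_div, div_le_div_iff₀ (by positivity) (by positivity)]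
    nlinarith
  have hsplit : c / 2 / v = 3 * c / (4 * v) - c / (4 * v) := by field_simp; ring
  linarith [(abs_le.1 hdrift).1, lt_of_abs_sub_div_lt_div_rpow hv hK₁ hf0]

theorem first_order_monotony_general
    (U : Set (ℝ × ℝ))
    (hUopen : ∃ V : Set (ℝ × ℝ), IsOpen V ∧ U = V ∩ {p : ℝ × ℝ | 0 ≤ p.2})
    (hU0 : (0, 0) ∈ U)
    (Ustar : Set (ℝ × ℝ)) (hUstar : Ustar = U \ {(0, 0)})
    (ω : ℝ) (hω : 0 < ω)
    (χ : ℝ × ℝ → ℝ) (χ' : ℝ × ℝ → ℝ)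
    (hdiff : ∀ p ∈ Ustar, p.2 ≠ 0 →
      HasDerivAt (fun s : ℝ => χ (s, p.2)) (χ' p) p.1)
    (ν : ℝ → ℝ) (hν : ∀ t : ℝ, t ≠ 0 → 0 < ν t)
    (hbound : ∀ t : ℝ, t ≠ 0 → ∀ w : ℝ, (t, w) ∈ Ustar → w < |t| / ν t →
      |χ (t, w)| ≤ ω)
    (c K₁ K₂ ε : ℝ) (hc : 0 < c) (hK₁ : 0 < K₁) (hK₂ : 0 < K₂) (hε : 0 < ε)
    (hsing : ∀ v : ℝ, (0, v) ∈ Ustar → v ≠ 0 →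
      |χ (0, v) - c / v| < K₁ / v ^ (1 - ε))
    (hderivbound : ∀ p ∈ Ustar, p.2 ≠ 0 → |χ' p| < K₂ / p.2 ^ 2) :
    ∃ δ > 0, ∃ ε' > 0, ∃ ν' : ℝ → ℝ, (∀ t : ℝ, t ≠ 0 → 0 < ν' t) ∧
      ∀ t v w : ℝ, t ≠ 0 → (t, v) ∈ Ustar → (t, w) ∈ Ustar →
        v < δ → ν' t * w < |t| → |t| < ε' * v →
        |χ (t, w)| < χ (t, v) := by
  obtain ⟨r, hr, hbox⟩ := exists_pos_forall_mem_of_relOpen_upperHalfPlane hUopen hU0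
  refine ⟨min r (min (c / 2 / ω) ((c / 4 / K₁) ^ ε⁻¹)), by positivity,
    min 1 (c / 4 / K₂), by positivity, ν, hν, ?_⟩
  intro t v w ht _ hw hvδ hνw htε
  obtain ⟨hvr, hvω, hvK₁⟩ : v < r ∧ v < c / 2 / ω ∧ v < (c / 4 / K₁) ^ ε⁻¹ := by
    simpa only [lt_min_iff] using hvδ
  have hv : 0 < v := pos_of_mul_pos_right ((abs_pos.2 ht).trans htε) (by positivity)
  have htv : |t| < v := htε.trans_le (mul_le_of_le_one_left hv.le (min_le_left _ _))
  have hseg : ∀ s ∈ uIcc 0 t, (s, v) ∈ Ustar := by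
    intro s hs
    have hst : |s| ≤ |t| := by simpa using abs_sub_left_of_mem_uIcc hs
    rw [hUstar]
    exact ⟨hbox s v (hst.trans_lt (htv.trans hvr)) hv.le hvr, fun h => hv.ne' (Prod.mk.inj h).2⟩
  have hχw := hbound t ht w hw ((lt_div_iff₀' (hν t ht)).2 hνw)
  have hωv : ω < c / 2 / v := (lt_div_comm₀ hv hω).1 hvω
  have hχv : c / 2 / v < χ (t, v) := by
    refine half_div_lt_of_abs_sub_div_lt_of_abs_deriv_lt (f := fun s => χ (s, v)) hv
      (fun s hs => hdiff (s, v) (hseg s hs) hv.ne')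
      (fun s hs => hderivbound (s, v) (hseg s hs) hv.ne')
      (hsing v (hseg 0 left_mem_uIcc) hv.ne') ?_ ?_
    · exact ((lt_div_iff₀' hK₁).1 ((lt_rpow_inv_iff_of_pos hv.le (by positivity) hε).1 hvK₁)).le
    · have := htε.le.trans (mul_le_mul_of_nonneg_right (min_le_right _ _) hv.le)
      rwa [div_mul_eq_mul_div, le_div_iff₀' hK₂] at this
  linarith

/-- **First-order monotony criterion (Lemma 1).**
Let `H² = {(t,v) : v ≥ 0}`, `U ⊆ H²` an open neighbourhood of the origin (in the
subspace topology of the half plane), and `U* = U \ {0}`.  Let `ω > 0` and let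
`χ : ℝ × ℝ → ℝ` belong to the class `Ψ₁^ω(U)`, i.e.:
* `χ` is continuous on `U*`;
* `χ` is continuously differentiable in `t` off the line `v = 0`, with derivative `χ'`
  continuous there;
* for every `t ≠ 0` there is `ν t > 0` such that `|χ(t,w)| ≤ ω` whenever `w < |t|/ν t`;
* there are constants `c, K₁, K₂, ε > 0` with `|χ(0,v) − c/v| < K₁/v^(1−ε)` and
  `|∂χ/∂t (t,v)| < K₂/v²` for `v ≠ 0` in `U*`.
Then there are `δ, ε' > 0` and for every `t ≠ 0` a constant `ν' t > 0` such that
for all `(t,v), (t,w) ∈ U*` with `v < δ` and `ν' t · w < |t| < ε' · v` one has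
`χ(t,v) > |χ(t,w)|`. -/
theorem first_order_monotony
    (U : Set (ℝ × ℝ)) (hUsub : U ⊆ {p : ℝ × ℝ | 0 ≤ p.2})
    (hUopen : ∃ V : Set (ℝ × ℝ), IsOpen V ∧ U = V ∩ {p : ℝ × ℝ | 0 ≤ p.2})
    (hU0 : (0, 0) ∈ U)
    (Ustar : Set (ℝ × ℝ)) (hUstar : Ustar = U \ {(0, 0)})
    (ω : ℝ) (hω : 0 < ω)
    (χ : ℝ × ℝ → ℝ) (χ' : ℝ × ℝ → ℝ)
    (hcont : ContinuousOn χ Ustar)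
    (hdiff : ∀ p ∈ Ustar, p.2 ≠ 0 →
      HasDerivAt (fun s : ℝ => χ (s, p.2)) (χ' p) p.1)
    (hdiffcont : ContinuousOn χ' {p ∈ Ustar | p.2 ≠ 0})
    (ν : ℝ → ℝ) (hν : ∀ t : ℝ, t ≠ 0 → 0 < ν t)
    (hbound : ∀ t : ℝ, t ≠ 0 → ∀ w : ℝ, (t, w) ∈ Ustar → w < |t| / ν t →
      |χ (t, w)| ≤ ω)
    (c K₁ K₂ ε : ℝ) (hc : 0 < c) (hK₁ : 0 < K₁) (hK₂ : 0 < K₂) (hε : 0 < ε)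
    (hsing : ∀ v : ℝ, (0, v) ∈ Ustar → v ≠ 0 →
      |χ (0, v) - c / v| < K₁ / v ^ (1 - ε))
    (hderivbound : ∀ p ∈ Ustar, p.2 ≠ 0 → |χ' p| < K₂ / p.2 ^ 2) :
    ∃ δ > 0, ∃ ε' > 0, ∃ ν' : ℝ → ℝ, (∀ t : ℝ, t ≠ 0 → 0 < ν' t) ∧
      ∀ t v w : ℝ, t ≠ 0 → (t, v) ∈ Ustar → (t, w) ∈ Ustar →
        v < δ → ν' t * w < |t| → |t| < ε' * v →
        |χ (t, w)| < χ (t, v) :=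
  first_order_monotony_general U hUopen hU0 Ustar hUstar ω hω χ χ' hdiff ν hν hbound c K₁ K₂ ε hc
    hK₁ hK₂ hε hsing hderivbound
end

section
/- Let γ > 0 and let f ∈ C¹(ℝ) satisfy f(0) > 0 and lim_{x→±∞} |x|^γ f(x) = C for some finite C > 0, and let χ̃ ∈ C¹(U*) be bounded. Then the function χ(t,v) = v^{−γ} f(t/v) + χ̃(t,v) (for v > 0) satisfies conditions (1) and (2) of the class Ψ₂^γ: there exist constants A, K, ε, ν, C', η, B > 0 such that χ(t,v) ≥ C'·C·|t|^{−γ}/2 whenever |t| > ν v (for small t, v), and |χ(t,v)| < B·v^{−γ} whenever |t| < η v. -/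
/-!
For `|t| > ν v` the ratio `x = t / v` lies in the tail where `|x| ^ γ f x ≥ C / 2`, and
`v ^ (-γ) f (t / v) = |t| ^ (-γ) · |x| ^ γ f x`, so the scaling part is at least
`(C / 2) |t| ^ (-γ)`.
Since `|t| ^ (-γ) → ∞` as `t → 0`, half of this absorbs the bounded perturbation `χ̃` for small `t`.
For `|t| < v` the argument `t / v` stays in `[-1, 1]`, where `f` is bounded, and `v ^ (-γ) ≥ 1`
for `v ≤ 1` absorbs `χ̃` again.
-/

open Real Filter Set Topology

lemma exists_forall_mem_diff_origin {V : Set (ℝ × ℝ)} (hV : IsOpen V)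
    (h0 : ((0 : ℝ), (0 : ℝ)) ∈ V) :
    ∃ r > 0, ∀ t v : ℝ, 0 < v → v < r → |t| < r →
      (t, v) ∈ (V ∩ {p : ℝ × ℝ | 0 ≤ p.2}) \ {(0, 0)} := by
  obtain ⟨r, hr, hball⟩ := Metric.isOpen_iff.1 hV _ h0
  refine ⟨r, hr, fun t v hv hvr htr => ?_⟩
  refine ⟨⟨hball ?_, hv.le⟩, ?_⟩
  · simpa [Prod.dist_eq, Real.dist_eq, abs_of_pos hv] using And.intro htr hvr
  · simp [hv.ne']

lemma exists_forall_lt_of_tendsto_atTop_atBot {g : ℝ → ℝ} {C c : ℝ}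
    (htop : Tendsto g atTop (𝓝 C)) (hbot : Tendsto g atBot (𝓝 C)) (hc : c < C) :
    ∃ ν > 0, ∀ x, ν < |x| → c < g x := by
  obtain ⟨X, hX⟩ := eventually_atTop.1 (htop.eventually (eventually_gt_nhds hc))
  obtain ⟨X', hX'⟩ := eventually_atBot.1 (hbot.eventually (eventually_gt_nhds hc))
  refine ⟨max 1 (max X (-X')), by positivity, fun x hx => ?_⟩
  rcases lt_abs.1 hx with hx | hx
  · exact hX x (by linarith [le_max_left X (-X'), le_max_right 1 (max X (-X'))])
  · exact hX' x (by linarith [le_max_right X (-X'), le_max_right 1 (max X (-X'))])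

lemma exists_forall_le_mul_rpow_neg {γ a : ℝ} (hγ : 0 < γ) (ha : 0 < a) (M : ℝ) :
    ∃ δ > 0, ∀ s, 0 < s → s < δ → M ≤ a * s ^ (-γ) := by
  have hlim : Tendsto (fun s : ℝ => a * s ^ (-γ)) (𝓝[>] 0) atTop :=
    (tendsto_rpow_neg_nhdsGT_zero (neg_lt_zero.2 hγ)).const_mul_atTop ha
  obtain ⟨δ, hδ, hball⟩ := (nhdsGT_basis (0 : ℝ)).eventually_iff.1 (hlim.eventually_ge_atTop M)
  exact ⟨δ, hδ, fun s hs hsδ => hball ⟨hs, hsδ⟩⟩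

lemma mul_rpow_neg_le_rpow_neg_mul_div {f : ℝ → ℝ} {γ ν c t v : ℝ} (hν : 0 ≤ ν)
    (htail : ∀ x, ν < |x| → c ≤ |x| ^ γ * f x) (hv : 0 < v) (ht : ν * v < |t|) :
    c * |t| ^ (-γ) ≤ v ^ (-γ) * f (t / v) := by
  have ht0 : 0 < |t| := (mul_nonneg hν hv.le).trans_lt ht
  have habs : |t / v| = |t| / v := by rw [abs_div, abs_of_pos hv]
  have hx : c ≤ |t / v| ^ γ * f (t / v) := htail _ (by rwa [habs, lt_div_iff₀ hv])
  have hscale : |t| ^ (-γ) * |t / v| ^ γ = v ^ (-γ) := by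
    rw [habs, Real.div_rpow (abs_nonneg t) hv.le, Real.rpow_neg (abs_nonneg t),
      Real.rpow_neg hv.le]
    field_simp
  calc c * |t| ^ (-γ) ≤ |t| ^ (-γ) * (|t / v| ^ γ * f (t / v)) := by
        rw [mul_comm]; exact mul_le_mul_of_nonneg_left hx (Real.rpow_nonneg (abs_nonneg t) _)
    _ = v ^ (-γ) * f (t / v) := by rw [← mul_assoc, hscale]

lemma abs_rpow_neg_mul_add_lt {γ v a b M N : ℝ} (hγ : 0 ≤ γ) (hv : 0 < v) (hv1 : v ≤ 1)
    (ha : |a| ≤ M) (hb : |b| ≤ N) :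
    |v ^ (-γ) * a + b| < (M + N + 1) * v ^ (-γ) := by
  have hvγ : 1 ≤ v ^ (-γ) := Real.one_le_rpow_of_pos_of_le_one_of_nonpos hv hv1 (by linarith)
  have hN : 0 ≤ N := (abs_nonneg b).trans hb
  calc |v ^ (-γ) * a + b| ≤ |v ^ (-γ) * a| + |b| := abs_add_le _ _
    _ = v ^ (-γ) * |a| + |b| := by rw [abs_mul, abs_of_pos (by positivity)]
    _ ≤ v ^ (-γ) * M + N * v ^ (-γ) := by
        gcongr
        exact hb.trans (le_mul_of_one_le_right hN hvγ)
    _ < (M + N + 1) * v ^ (-γ) := by linarith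

lemma exists_abs_rpow_neg_mul_comp_div_add_lt {f : ℝ → ℝ} {γ M : ℝ} (hf : Continuous f)
    (hγ : 0 ≤ γ) (hM : 0 ≤ M) :
    ∃ B > 0, ∀ t v b : ℝ, 0 < v → v ≤ 1 → |t| ≤ v → |b| ≤ M →
      |v ^ (-γ) * f (t / v) + b| < B * v ^ (-γ) := by
  obtain ⟨Mf, hMf⟩ := (isCompact_Icc (a := (-1 : ℝ)) (b := 1)).exists_bound_of_continuousOn
    hf.continuousOn
  have hMf0 : 0 ≤ Mf := (norm_nonneg _).trans (hMf 0 ⟨by norm_num, by norm_num⟩)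
  refine ⟨Mf + M + 1, by positivity, fun t v b hv hv1 htv hb => ?_⟩
  have hx : t / v ∈ Icc (-1 : ℝ) 1 :=
    abs_le.1 (by rwa [abs_div, abs_of_pos hv, div_le_one hv])
  exact abs_rpow_neg_mul_add_lt hγ hv hv1 (hMf _ hx) hb

theorem scaling_form_in_second_order_class_general
    (U : Set (ℝ × ℝ))
    (hUopen : ∃ V : Set (ℝ × ℝ), IsOpen V ∧ U = V ∩ {p : ℝ × ℝ | 0 ≤ p.2})
    (hU0 : (0, 0) ∈ U)
    (Ustar : Set (ℝ × ℝ)) (hUstar : Ustar = U \ {(0, 0)})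
    (γ : ℝ) (hγ : 0 < γ)
    (f : ℝ → ℝ) (hf : ContDiff ℝ 1 f)
    (C : ℝ) (hC : 0 < C)
    (hftop : Tendsto (fun x : ℝ => |x| ^ γ * f x) atTop (nhds C))
    (hfbot : Tendsto (fun x : ℝ => |x| ^ γ * f x) atBot (nhds C))
    (χtil : ℝ × ℝ → ℝ) (Mb : ℝ)
    (hχtil : ∀ p ∈ Ustar, |χtil p| ≤ Mb)
    (χ : ℝ → ℝ → ℝ)
    (hχ : ∀ t v : ℝ, 0 < v → χ t v = v ^ (-γ) * f (t / v) + χtil (t, v)) :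
    ∃ ν > 0, ∃ C' > 0, ∃ η > 0, ∃ B > 0, ∃ δ > 0,
      (∀ t v : ℝ, 0 < v → v < δ → |t| < δ → ν * v < |t| →
        C' * C * |t| ^ (-γ) / 2 ≤ χ t v) ∧
      (∀ t v : ℝ, 0 < v → v < δ → |t| < η * v → |χ t v| < B * v ^ (-γ)) := by
  obtain ⟨V, hV, rfl⟩ := hUopen
  subst hUstar
  obtain ⟨r, hr, hmem⟩ := exists_forall_mem_diff_origin hV hU0.1
  have hMb : 0 ≤ Mb :=
    (abs_nonneg _).trans (hχtil _ (hmem 0 (r / 2) (by linarith) (by linarith) (by simpa using hr)))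
  obtain ⟨ν, hν, htail⟩ := exists_forall_lt_of_tendsto_atTop_atBot hftop hfbot (half_lt_self hC)
  obtain ⟨δ₀, hδ₀, hsmall⟩ := exists_forall_le_mul_rpow_neg hγ (by positivity : 0 < C / 4) Mb
  obtain ⟨B, hB, hbound⟩ := exists_abs_rpow_neg_mul_comp_div_add_lt hf.continuous hγ.le hMb
  refine ⟨ν, hν, 1 / 2, by norm_num, 1, one_pos, B, hB, min (min 1 r) δ₀, by positivity, ?_, ?_⟩
  · intro t v hv hvδ htδ hνv
    simp only [lt_min_iff] at hvδ htδ
    have ht : 0 < |t| := (mul_pos hν hv).trans hνv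
    have hχtil_ge := (abs_le.1 (hχtil _ (hmem t v hv hvδ.1.2 htδ.1.2))).1
    have hmain := mul_rpow_neg_le_rpow_neg_mul_div hν.le (fun x hx => (htail x hx).le) hv hνv
    have hpert := hsmall |t| ht htδ.2
    rw [hχ t v hv]
    linarith
  · intro t v hv hvδ htv
    simp only [lt_min_iff] at hvδ
    rw [one_mul] at htv
    rw [hχ t v hv]
    exact hbound t v _ hv hvδ.1.1.le htv.le
      (hχtil _ (hmem t v hv hvδ.1.2 (htv.trans hvδ.1.2)))

/-- **Scaling-form criterion for the second-order class `Ψ₂^γ`.**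
Let `γ > 0`, let `f ∈ C¹(ℝ)` with `f(0) > 0` and `|x|^γ f(x) → C` as `x → ±∞` for
some finite `C > 0`, and let `χ̃` be a bounded `C¹` function on `U*`.  Then
`χ(t,v) = v^(−γ) f(t/v) + χ̃(t,v)` (for `v > 0`) satisfies conditions (1) and (2)
of the class `Ψ₂^γ`: there exist constants `ν, C', η, B > 0` (and a smallness
scale `δ > 0`) such that `χ(t,v) ≥ C'·C·|t|^(−γ)/2` whenever `|t| > ν·v` (for small
`t, v`), and `|χ(t,v)| < B·v^(−γ)` whenever `|t| < η·v`. -/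
theorem scaling_form_in_second_order_class
    (U : Set (ℝ × ℝ)) (hUsub : U ⊆ {p : ℝ × ℝ | 0 ≤ p.2})
    (hUopen : ∃ V : Set (ℝ × ℝ), IsOpen V ∧ U = V ∩ {p : ℝ × ℝ | 0 ≤ p.2})
    (hU0 : (0, 0) ∈ U)
    (Ustar : Set (ℝ × ℝ)) (hUstar : Ustar = U \ {(0, 0)})
    (γ : ℝ) (hγ : 0 < γ)
    (f : ℝ → ℝ) (hf : ContDiff ℝ 1 f) (hf0 : 0 < f 0)
    (C : ℝ) (hC : 0 < C)
    (hftop : Tendsto (fun x : ℝ => |x| ^ γ * f x) atTop (nhds C))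
    (hfbot : Tendsto (fun x : ℝ => |x| ^ γ * f x) atBot (nhds C))
    (χtil : ℝ × ℝ → ℝ) (Mb : ℝ)
    (hχtil : ∀ p ∈ Ustar, |χtil p| ≤ Mb)
    (hχtilC1 : ContDiffOn ℝ 1 χtil Ustar)
    (χ : ℝ → ℝ → ℝ)
    (hχ : ∀ t v : ℝ, 0 < v → χ t v = v ^ (-γ) * f (t / v) + χtil (t, v)) :
    ∃ ν > 0, ∃ C' > 0, ∃ η > 0, ∃ B > 0, ∃ δ > 0,
      (∀ t v : ℝ, 0 < v → v < δ → |t| < δ → ν * v < |t| →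
        C' * C * |t| ^ (-γ) / 2 ≤ χ t v) ∧
      (∀ t v : ℝ, 0 < v → v < δ → |t| < η * v → |χ t v| < B * v ^ (-γ)) :=
  scaling_form_in_second_order_class_general U hUopen hU0 Ustar hUstar γ hγ f hf C hC hftop hfbot
    χtil Mb hχtil χ hχ
end

section
/- Let x° : ℝ → ℝ be smooth and even with x°''(h) > 0 for all h, satisfying the Lebowitz-type inequality x°'''(h) < 0 for all h > 0. Then for every κ ≥ 0 with 12κ x°''(0) ≤ 1, the point h = 0 is the global minimum of f̄(h) = −(x°(h) + 6κ x°'(h)² − h x°'(h)) on ℝ. -/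
open Real

/-- **Global minimality of the symmetric mean-field solution below `κ_c`.**
Let `x° : ℝ → ℝ` be smooth and even with `x°'' > 0` everywhere, satisfying the
Lebowitz-type inequality `x°'''(h) < 0` for all `h > 0`.  Then for every
`κ ≥ 0` with `12κ x°''(0) ≤ 1`, the point `h = 0` is the global minimum of
`f̄(h) = −(x°(h) + 6κ x°'(h)² − h x°'(h))` on `ℝ`. -/
theorem mean_field_global_minimum (κ : ℝ) (hκ : 0 ≤ κ)
    (x0 : ℝ → ℝ) (hx0 : ContDiff ℝ (⊤ : ℕ∞) x0)
    (heven : ∀ h : ℝ, x0 (-h) = x0 h)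
    (hconv : ∀ h : ℝ, 0 < iteratedDeriv 2 x0 h)
    (hLeb : ∀ h : ℝ, 0 < h → iteratedDeriv 3 x0 h < 0)
    (hsub : 12 * κ * iteratedDeriv 2 x0 0 ≤ 1)
    (fbar : ℝ → ℝ)
    (hfbar : ∀ h : ℝ, fbar h =
      -(x0 h + 6 * κ * (deriv x0 h) ^ 2 - h * deriv x0 h)) :
    ∀ h : ℝ, fbar 0 ≤ fbar h := by
  set g : ℝ → ℝ := deriv x0 with hg
  set k : ℝ → ℝ := iteratedDeriv 2 x0 with hk
  -- smoothness facts
  have hx0' : ContDiff ℝ ((⊤:ℕ∞):WithTop ℕ∞) x0 := hx0.of_le (by simp)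
  have hx0d : Differentiable ℝ x0 := hx0.differentiable (by simp)
  have hgsm : ContDiff ℝ ((⊤:ℕ∞):WithTop ℕ∞) g := (contDiff_infty_iff_deriv.mp hx0').2
  have hgd : Differentiable ℝ g := hgsm.differentiable (by simp)
  have hkg : k = deriv g := by
    rw [hk, hg]
    ext t
    rw [iteratedDeriv_succ, iteratedDeriv_one]
  have hksm : ContDiff ℝ ((⊤:ℕ∞):WithTop ℕ∞) k := by rw [hkg]; exact (contDiff_infty_iff_deriv.mp hgsm).2
  have hkd : Differentiable ℝ k := hksm.differentiable (by simp)
  have hdk : deriv k = iteratedDeriv 3 x0 := by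
    rw [hk]; rw [← iteratedDeriv_succ]
  -- g is odd
  have godd : ∀ h : ℝ, g (-h) = -g h := by
    intro h
    have h1 : HasDerivAt (fun t : ℝ => x0 (-t)) (g (-h) * (-1)) h :=
      (hx0d.differentiableAt.hasDerivAt (x := -h)).comp h (hasDerivAt_neg h)
    have h2 : (fun t : ℝ => x0 (-t)) = x0 := funext heven
    rw [h2] at h1
    have := h1.deriv
    rw [← hg] at this
    linarith
  have g0 : g 0 = 0 := by have := godd 0; simp at this; linarith
  -- k is antitone on [0, ∞)
  have hkanti : AntitoneOn k (Set.Ici (0:ℝ)) := by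
    apply antitoneOn_of_deriv_nonpos (convex_Ici 0) hkd.continuous.continuousOn
      hkd.differentiableOn
    intro t ht
    rw [interior_Ici] at ht
    rw [hdk]
    exact le_of_lt (hLeb t ht)
  -- g h ≤ k 0 * h for h ≥ 0
  have hglin : ∀ h : ℝ, 0 ≤ h → g h ≤ k 0 * h := by
    intro h hh
    have hψd : ∀ t : ℝ, HasDerivAt (fun t => k 0 * t - g t) (k 0 - k t) t := by
      intro t
      have := ((hasDerivAt_id t).const_mul (k 0)).sub
        (by rw [hkg]; exact hgd.differentiableAt.hasDerivAt : HasDerivAt g (k t) t)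
      rw [mul_one] at this
      exact this
    have hmono : MonotoneOn (fun t => k 0 * t - g t) (Set.Ici (0:ℝ)) := by
      apply monotoneOn_of_deriv_nonneg (convex_Ici 0)
        (fun t _ => (hψd t).continuousAt.continuousWithinAt)
        (fun t _ => (hψd t).differentiableAt.differentiableWithinAt)
      intro t ht
      rw [interior_Ici] at ht
      rw [(hψd t).deriv]
      have := hkanti (Set.self_mem_Ici) (le_of_lt ht : (0:ℝ) ≤ t) (le_of_lt ht)
      linarith
    have h2 := hmono Set.self_mem_Ici hh hh
    simp only [g0, mul_zero, sub_zero] at h2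
    linarith
  -- g h ≥ 0 for h ≥ 0
  have hgpos : ∀ h : ℝ, 0 ≤ h → 0 ≤ g h := by
    intro h hh
    have hmono : StrictMono g := by
      apply strictMono_of_deriv_pos
      intro t
      rw [← hkg]; exact hconv t
    calc (0:ℝ) = g 0 := g0.symm
    _ ≤ g h := hmono.monotone hh
  -- the key function φ
  set φ : ℝ → ℝ := fun t => t * g t - (x0 t - x0 0) - 6 * κ * (g t) ^ 2 with hφ
  have hφd : ∀ t : ℝ, HasDerivAt φ (k t * (t - 12 * κ * g t)) t := by
    intro t
    have h1 : HasDerivAt (fun t => t * g t) (1 * g t + t * k t) t :=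
      (hasDerivAt_id t).mul (by rw [hkg]; exact hgd.differentiableAt.hasDerivAt)
    have h2 : HasDerivAt (fun t => x0 t - x0 0) (g t) t := by
      exact (hx0d.differentiableAt.hasDerivAt (x := t)).sub_const (x0 0)
    have h3 : HasDerivAt (fun t => 6 * κ * (g t) ^ 2) (6 * κ * (2 * g t ^ 1 * k t)) t := by
      exact (((by rw [hkg]; exact hgd.differentiableAt.hasDerivAt : HasDerivAt g (k t) t).pow
        2).const_mul (6 * κ))
    have := (h1.sub h2).sub h3
    exact this.congr_deriv (by ring)
  have hφmono : MonotoneOn φ (Set.Ici (0:ℝ)) := by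
    apply monotoneOn_of_deriv_nonneg (convex_Ici 0)
    · exact fun t _ => (hφd t).continuousAt.continuousWithinAt
    · exact fun t _ => ((hφd t).differentiableAt).differentiableWithinAt
    · intro t ht
      rw [interior_Ici] at ht
      have ht' : (0:ℝ) < t := ht
      rw [(hφd t).deriv]
      have hk0 : 0 < k t := hconv t
      have h1 : g t ≤ k 0 * t := hglin t ht'.le
      have h2 : 12 * κ * g t ≤ 12 * κ * (k 0 * t) := by nlinarith
      have h3 : 12 * κ * (k 0 * t) ≤ t := by
        nlinarith [mul_le_mul_of_nonneg_right hsub ht'.le]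
      nlinarith
  have hφnn : ∀ h : ℝ, 0 ≤ h → 0 ≤ φ h := by
    intro h hh
    have := hφmono Set.self_mem_Ici hh hh
    have hφ0 : φ 0 = 0 := by simp [hφ, g0]
    linarith
  -- conclude
  have key : ∀ h : ℝ, 0 ≤ h → fbar 0 ≤ fbar h := by
    intro h hh
    have hφh : 0 ≤ h * g h - (x0 h - x0 0) - 6 * κ * g h ^ 2 := hφnn h hh
    rw [hfbar, hfbar, g0]
    nlinarith [hφh]
  intro h
  rcases le_or_gt 0 h with hh | hh
  · exact key h hh
  · have hfe : fbar h = fbar (-h) := by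
      rw [hfbar, hfbar]
      rw [show x0 (-h) = x0 h from heven h, show g (-h) = -g h from godd h]
      ring
    rw [hfe]
    exact key (-h) (by linarith)
end
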